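/- arXiv:2511.03074 — 3 statements merged into one kernel-verified Lean document; each statement's English description precedes it below -/
import Mathlib

section
/- For every odd integer b ≥ 1 and every p ∈ [0,1], the variance of the block-median indicator is no larger than the Bernoulli variance: q_b(p)·(1 − q_b(p)) ≤ p·(1 − p). -/
/-!
Let `L n p m` be the probability that `Binomial(n, p)` is below `m`. Conditioning on the last
trial gives `L (n+1) p (m+1) = p L n p m + (1-p) L n p (m+1)`; applying this twice shows that
going from `b = 2k+1` to `b + 2` changes `q_b(p)` by `C(2k+1, k) (p(1-p))^(k+1) (2p-1)`, which has
the sign of `2p - 1`. Since `q_1(p) = p`, `q_b(p) - p` always has the sign of `2p - 1`, i.e.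
`q_b(p)` is at least as far from `1/2` as `p`, and `x(1-x) = 1/4 - (x - 1/2)^2`.
-/

/-- The majority function `q_b(p)`: the probability that a `Binomial(b,p)` random
variable is at least `(b+1)/2`. -/
noncomputable def qmaj (b : ℕ) (p : ℝ) : ℝ :=
  ∑ r ∈ Finset.Icc ((b + 1) / 2) b, (b.choose r : ℝ) * p ^ r * (1 - p) ^ (b - r)

open Finset

noncomputable def binomialMass (n : ℕ) (p : ℝ) (r : ℕ) : ℝ :=
  (n.choose r : ℝ) * p ^ r * (1 - p) ^ (n - r)

noncomputable def binomialLowerTail (n : ℕ) (p : ℝ) (m : ℕ) : ℝ :=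
  ∑ r ∈ range m, binomialMass n p r

section

variable (n : ℕ) (p : ℝ)

theorem binomialMass_succ_zero : binomialMass (n + 1) p 0 = (1 - p) * binomialMass n p 0 := by
  simp only [binomialMass, Nat.choose_zero_right, Nat.sub_zero]
  ring

theorem binomialMass_succ_succ (r : ℕ) :
    binomialMass (n + 1) p (r + 1)
      = p * binomialMass n p r + (1 - p) * binomialMass n p (r + 1) := by
  simp only [binomialMass, Nat.choose_succ_succ', Nat.cast_add, Nat.add_sub_add_right]
  by_cases hr : r + 1 ≤ n
  · rw [show n - r = n - (r + 1) + 1 by omega]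
    ring
  · rw [Nat.choose_eq_zero_of_lt (by omega : n < r + 1)]
    ring

theorem sum_binomialMass : ∑ r ∈ range (n + 1), binomialMass n p r = 1 := by
  calc ∑ r ∈ range (n + 1), binomialMass n p r
      = ∑ r ∈ range (n + 1), p ^ r * (1 - p) ^ (n - r) * n.choose r :=
        sum_congr rfl fun r _ => by rw [binomialMass]; ring
    _ = 1 := by rw [← add_pow, add_sub_cancel, one_pow]

theorem binomialLowerTail_succ_succ (m : ℕ) :
    binomialLowerTail (n + 1) p (m + 1)
      = p * binomialLowerTail n p m + (1 - p) * binomialLowerTail n p (m + 1) := by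
  simp only [binomialLowerTail, sum_range_succ', binomialMass_succ_succ, binomialMass_succ_zero,
    sum_add_distrib, ← mul_sum]
  ring

theorem binomialLowerTail_succ (m : ℕ) :
    binomialLowerTail n p (m + 1) = binomialLowerTail n p m + binomialMass n p m :=
  sum_range_succ _ _

theorem sum_Icc_binomialMass {m : ℕ} (hm : m ≤ n + 1) :
    ∑ r ∈ Icc m n, binomialMass n p r = 1 - binomialLowerTail n p m := by
  rw [← sum_binomialMass n p, binomialLowerTail, ← sum_range_add_sum_Ico _ hm,
    ← Ico_add_one_right_eq_Icc]
  ring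

end

theorem qmaj_eq_one_sub_binomialLowerTail (b : ℕ) (p : ℝ) :
    qmaj b p = 1 - binomialLowerTail b p ((b + 1) / 2) :=
  sum_Icc_binomialMass b p (by omega)

theorem qmaj_two_mul_succ_add_one (k : ℕ) (p : ℝ) :
    qmaj (2 * (k + 1) + 1) p
      = qmaj (2 * k + 1) p
        + ((2 * k + 1).choose k : ℝ) * (p * (1 - p)) ^ (k + 1) * (2 * p - 1) := by
  have hn : 2 * (k + 1) + 1 = 2 * k + 1 + 1 + 1 := by ring
  rw [qmaj_eq_one_sub_binomialLowerTail, qmaj_eq_one_sub_binomialLowerTail,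
    show (2 * (k + 1) + 1 + 1) / 2 = k + 1 + 1 by omega,
    show (2 * k + 1 + 1) / 2 = k + 1 by omega, hn,
    binomialLowerTail_succ_succ (2 * k + 1 + 1) p (k + 1),
    binomialLowerTail_succ_succ (2 * k + 1) p k, binomialLowerTail_succ_succ (2 * k + 1) p (k + 1),
    binomialLowerTail_succ _ _ (k + 1), binomialLowerTail_succ _ _ k]
  simp only [binomialMass, mul_pow, Nat.choose_symm_half, show 2 * k + 1 - k = k + 1 by omega,
    show 2 * k + 1 - (k + 1) = k by omega]
  ring

theorem qmaj_sub_mul_two_mul_sub_one_nonneg (k : ℕ) {p : ℝ} (hp0 : 0 ≤ p) (hp1 : p ≤ 1) :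
    0 ≤ (qmaj (2 * k + 1) p - p) * (2 * p - 1) := by
  induction k with
  | zero => simp [qmaj]
  | succ k ih =>
    rw [qmaj_two_mul_succ_add_one]
    have hcoeff : 0 ≤ ((2 * k + 1).choose k : ℝ) * (p * (1 - p)) ^ (k + 1) := by
      have : 0 ≤ 1 - p := by linarith
      positivity
    nlinarith [sq_nonneg (2 * p - 1)]

theorem majority_variance_domination_general (b : ℕ) (hb : Odd b)
    (p : ℝ) (hp0 : 0 ≤ p) (hp1 : p ≤ 1) :
    qmaj b p * (1 - qmaj b p) ≤ p * (1 - p) := by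
  obtain ⟨k, rfl⟩ := hb
  nlinarith [qmaj_sub_mul_two_mul_sub_one_nonneg k hp0 hp1, sq_nonneg (qmaj (2 * k + 1) p - p)]

/-- For every odd `b ≥ 1` and every `p ∈ [0,1]`, the variance of the block-median
indicator is no larger than the Bernoulli variance:
`q_b(p) * (1 - q_b(p)) ≤ p * (1 - p)`. -/
theorem majority_variance_domination (b : ℕ) (hb : Odd b) (hb1 : 1 ≤ b)
    (p : ℝ) (hp0 : 0 ≤ p) (hp1 : p ≤ 1) :
    qmaj b p * (1 - qmaj b p) ≤ p * (1 - p) :=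
  majority_variance_domination_general b hb p hp0 hp1
end

section
/- For every odd integer b ≥ 1, the majority map pushes away from 1/2: if 1/2 ≤ p ≤ 1 then q_b(p) ≥ p, and if 0 ≤ p ≤ 1/2 then q_b(p) ≤ p. -/
open Polynomial Finset

namespace bernsteinPolynomial

variable (R : Type*) [CommRing R]

theorem sum_Ico_comp_one_sub (n k : ℕ) :
    (∑ ν ∈ Ico k (n + 1), bernsteinPolynomial R n ν).comp (1 - X) =
      ∑ ν ∈ range (n + 1 - k), bernsteinPolynomial R n ν := by
  rw [Polynomial.sum_comp]
  calc ∑ ν ∈ Ico k (n + 1), (bernsteinPolynomial R n ν).comp (1 - X)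
      = ∑ ν ∈ Ico k (n + 1), bernsteinPolynomial R n (n - ν) :=
        sum_congr rfl fun ν hν => flip R n ν (Nat.lt_succ_iff.mp (mem_Ico.mp hν).2)
    _ = ∑ ν ∈ range (n + 1 - k), bernsteinPolynomial R n ν := by
        rw [sum_Ico_reflect _ _ le_rfl, Nat.sub_self, range_eq_Ico]

theorem derivative_sum_Ico (n k : ℕ) (hk : k ≤ n + 1) :
    derivative (∑ ν ∈ Ico (k + 1) (n + 1 + 1), bernsteinPolynomial R (n + 1) ν) =
      (n + 1) * bernsteinPolynomial R n k := by
  calc derivative (∑ ν ∈ Ico (k + 1) (n + 1 + 1), bernsteinPolynomial R (n + 1) ν)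
      = ∑ ν ∈ Ico k (n + 1), derivative (bernsteinPolynomial R (n + 1) (ν + 1)) := by
        rw [derivative_sum, sum_Ico_add' (fun ν => derivative (bernsteinPolynomial R (n + 1) ν))]
    _ = (n + 1) * -∑ ν ∈ Ico k (n + 1),
          (bernsteinPolynomial R n (ν + 1) - bernsteinPolynomial R n ν) := by
        simp only [derivative_succ_aux, mul_sum, ← sum_neg_distrib, neg_sub]
    _ = (n + 1) * bernsteinPolynomial R n k := by
        rw [sum_Ico_sub _ hk, eq_zero_of_lt R n.lt_succ_self, zero_sub, neg_neg]

end bernsteinPolynomial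

noncomputable def majorityPoly (m : ℕ) : ℝ[X] :=
  ∑ ν ∈ Ico (m + 1) (2 * m + 1 + 1), bernsteinPolynomial ℝ (2 * m + 1) ν

lemma qmaj_odd_eq_eval (m : ℕ) (p : ℝ) : qmaj (2 * m + 1) p = (majorityPoly m).eval p := by
  have hmid : (2 * m + 1 + 1) / 2 = m + 1 := by omega
  simp [qmaj, majorityPoly, bernsteinPolynomial, eval_finsetSum, hmid,
    ← Ico_add_one_right_eq_Icc]

lemma majorityPoly_add_comp_one_sub (m : ℕ) :
    majorityPoly m + (majorityPoly m).comp (1 - X) = 1 := by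
  rw [majorityPoly, bernsteinPolynomial.sum_Ico_comp_one_sub, add_comm,
    show 2 * m + 1 + 1 - (m + 1) = m + 1 by omega,
    sum_range_add_sum_Ico _ (by omega : m + 1 ≤ 2 * m + 1 + 1), bernsteinPolynomial.sum]

lemma derivative_majorityPoly (m : ℕ) :
    derivative (majorityPoly m) = (2 * m + 1) * bernsteinPolynomial ℝ (2 * m) m := by
  rw [majorityPoly, bernsteinPolynomial.derivative_sum_Ico ℝ (2 * m) m (by omega)]
  push_cast
  rfl

lemma qmaj_add_qmaj_one_sub (m : ℕ) (p : ℝ) :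
    qmaj (2 * m + 1) p + qmaj (2 * m + 1) (1 - p) = 1 := by
  have := congrArg (eval p) (majorityPoly_add_comp_one_sub m)
  simpa [qmaj_odd_eq_eval] using this

lemma qmaj_half (m : ℕ) : qmaj (2 * m + 1) (1 / 2) = 1 / 2 := by
  have := qmaj_add_qmaj_one_sub m (1 / 2)
  norm_num at this ⊢
  linarith

lemma qmaj_one (b : ℕ) : qmaj b 1 = 1 := by
  rw [qmaj, sum_eq_single_of_mem b (by simp; omega)]
  · simp
  · intro r hr hrb
    simp [Nat.sub_ne_zero_of_lt (lt_of_le_of_ne (mem_Icc.mp hr).2 hrb)]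

lemma antitoneOn_mul_one_sub_pow (m : ℕ) :
    AntitoneOn (fun x : ℝ => (x * (1 - x)) ^ m) (Set.Icc (1 / 2) 1) := by
  intro x hx y hy hxy
  simp only [Set.mem_Icc] at hx hy
  exact pow_le_pow_left₀ (by nlinarith) (by nlinarith) m

lemma concaveOn_qmaj_sub_id (m : ℕ) :
    ConcaveOn ℝ (Set.Icc (1 / 2) 1) (fun x => qmaj (2 * m + 1) x - x) := by
  have hf : (fun x : ℝ => qmaj (2 * m + 1) x - x) = fun x => (majorityPoly m - X).eval x := by
    ext x; simp [qmaj_odd_eq_eval]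
  rw [hf]
  refine AntitoneOn.concaveOn_of_deriv (convex_Icc _ _) (Polynomial.continuousOn _)
    (Polynomial.differentiableOn _) ?_
  have hderiv : deriv (fun x => (majorityPoly m - X).eval x) =
      fun x : ℝ => (2 * m + 1) * (2 * m).choose m * (x * (1 - x)) ^ m - 1 := by
    ext x
    rw [Polynomial.deriv, derivative_sub, derivative_majorityPoly]
    simp [bernsteinPolynomial, mul_pow, mul_assoc, show 2 * m - m = m by omega]
  rw [hderiv, interior_Icc]
  intro x hx y hy hxy
  have := antitoneOn_mul_one_sub_pow m (Set.Ioo_subset_Icc_self hx) (Set.Ioo_subset_Icc_self hy)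
    hxy
  dsimp only at this ⊢
  gcongr

lemma le_qmaj_of_half_le (m : ℕ) {p : ℝ} (hp : 1 / 2 ≤ p) (hp1 : p ≤ 1) :
    p ≤ qmaj (2 * m + 1) p := by
  have := (concaveOn_qmaj_sub_id m).min_le_of_mem_Icc (Set.left_mem_Icc.2 (by norm_num))
    (Set.right_mem_Icc.2 (by norm_num)) ⟨hp, hp1⟩
  simp only [qmaj_half, qmaj_one, sub_self, min_self] at this
  linarith

theorem majority_pushes_away_from_half_general (b : ℕ) (hb : Odd b) (p : ℝ) :
    (1 / 2 ≤ p → p ≤ 1 → p ≤ qmaj b p) ∧ (0 ≤ p → p ≤ 1 / 2 → qmaj b p ≤ p) := by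
  obtain ⟨m, rfl⟩ := hb
  refine ⟨le_qmaj_of_half_le m, fun _ hp => ?_⟩
  have := le_qmaj_of_half_le m (p := 1 - p) (by linarith) (by linarith)
  linarith [qmaj_add_qmaj_one_sub m p]

/-- For every odd `b ≥ 1`, the majority map pushes away from `1/2`:
if `1/2 ≤ p ≤ 1` then `q_b(p) ≥ p`, and if `0 ≤ p ≤ 1/2` then `q_b(p) ≤ p`. -/
theorem majority_pushes_away_from_half (b : ℕ) (hb : Odd b) (hb1 : 1 ≤ b) (p : ℝ) :
    (1 / 2 ≤ p → p ≤ 1 → p ≤ qmaj b p) ∧ (0 ≤ p → p ≤ 1 / 2 → qmaj b p ≤ p) :=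
  majority_pushes_away_from_half_general b hb p
end

section
/- Quadratic resolution of the variance-aware deviation: let x, a, v, α₀, β₀ be nonnegative reals. If x ≤ α₀·sqrt((v + x)·a) + β₀·a, then x ≤ 2·α₀·sqrt(v·a) + (2·β₀ + α₀²)·a. -/
/-- Quadratic resolution of the variance-aware deviation: if
`x ≤ α₀ √((v + x) a) + β₀ a` with `x, a, v, α₀, β₀ ≥ 0`, then
`x ≤ 2 α₀ √(v a) + (2 β₀ + α₀²) a`. -/
theorem variance_aware_quadratic_resolution (x a v α₀ β₀ : ℝ)
    (hx : 0 ≤ x) (ha : 0 ≤ a) (hv : 0 ≤ v) (hα : 0 ≤ α₀) (hβ : 0 ≤ β₀)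
    (h : x ≤ α₀ * Real.sqrt ((v + x) * a) + β₀ * a) :
    x ≤ 2 * α₀ * Real.sqrt (v * a) + (2 * β₀ + α₀ ^ 2) * a := by
  have h1 : Real.sqrt ((v + x) * a) ≤ Real.sqrt (v * a) + Real.sqrt (x * a) := by
    rw [add_mul]
    set p := v * a; set q := x * a
    have hp : 0 ≤ p := mul_nonneg hv ha
    have hq : 0 ≤ q := mul_nonneg hx ha
    have key : p + q ≤ (Real.sqrt p + Real.sqrt q) ^ 2 := by
      nlinarith [Real.sq_sqrt hp, Real.sq_sqrt hq, Real.sqrt_nonneg p, Real.sqrt_nonneg q,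
        mul_nonneg (Real.sqrt_nonneg p) (Real.sqrt_nonneg q)]
    calc Real.sqrt (p + q) ≤ Real.sqrt ((Real.sqrt p + Real.sqrt q) ^ 2) :=
          Real.sqrt_le_sqrt key
      _ = Real.sqrt p + Real.sqrt q :=
          Real.sqrt_sq (by positivity)
  have h2 : α₀ * Real.sqrt (x * a) ≤ x / 2 + α₀ ^ 2 * a / 2 := by
    have := sq_nonneg (Real.sqrt x - α₀ * Real.sqrt a)
    have hxx : Real.sqrt x ^ 2 = x := Real.sq_sqrt hx
    have haa : Real.sqrt a ^ 2 = a := Real.sq_sqrt ha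
    have hsplit : Real.sqrt (x * a) = Real.sqrt x * Real.sqrt a := Real.sqrt_mul hx a
    nlinarith [this]
  nlinarith [mul_le_mul_of_nonneg_left h1 hα]
end
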